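/- arXiv:2602.10005 — 4 statements merged into one kernel-verified Lean document; each statement's English description precedes it below -/
import Mathlib

section
/- The number of binary strings of length n that contain exactly m nonnull runs of ones (maximal blocks of consecutive ones, of positive length) equals binomial(n+1, 2m). -/
/-- The maximal runs of a binary string, as a list of (bit, length) pairs,
from left to right. -/
def runs : List Bool → List (Bool × ℕ)
  | [] => []
  | b :: l =>
    match runs l with
    | [] => [(b, 1)]
    | (c, k) :: rest => if b = c then (c, k + 1) :: rest else (b, 1) :: (c, k) :: rest

/-- The lengths of the maximal runs of ones (nonnull runs of ones) of a binary string. -/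
def oneRuns (l : List Bool) : List ℕ :=
  (runs l).filterMap fun p => if p.1 then some p.2 else none


lemma runs_cons (b : Bool) (l : List Bool) :
    runs (b :: l) = match runs l with
      | [] => [(b, 1)]
      | (c, k) :: rest => if b = c then (c, k + 1) :: rest else (b, 1) :: (c, k) :: rest := rfl

lemma runs_cons_head (c : Bool) (l : List Bool) : ∃ k t, runs (c :: l) = (c, k) :: t := by
  cases h : runs l with
  | nil => exact ⟨1, [], by rw [runs_cons, h]⟩
  | cons p rest =>
    obtain ⟨d, k⟩ := p
    by_cases hc : c = d
    · exact ⟨k + 1, rest, by rw [runs_cons, h]; simp [hc]⟩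
    · exact ⟨1, (d, k) :: rest, by rw [runs_cons, h]; simp [hc]⟩

lemma numRuns_cons (b : Bool) (l : List Bool) :
    (oneRuns (b :: l)).length
      = (oneRuns l).length + (if b = true ∧ l.headI = false then 1 else 0) := by
  cases l with
  | nil => cases b <;> simp [oneRuns, runs]
  | cons c l' =>
    obtain ⟨k, t, h⟩ := runs_cons_head c l'
    unfold oneRuns
    rw [runs_cons (l := c :: l'), h]
    cases b <;> cases c <;> simp

lemma card_succ {n : ℕ} (P : List Bool → Prop) [DecidablePred P] :
    (Finset.univ.filter fun s : Fin (n + 1) → Bool => P (List.ofFn s)).card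
      = (Finset.univ.filter fun s : Fin n → Bool => P (false :: List.ofFn s)).card
      + (Finset.univ.filter fun s : Fin n → Bool => P (true :: List.ofFn s)).card := by
  rw [Finset.card_filter, Finset.card_filter, Finset.card_filter]
  rw [Fintype.sum_equiv (Fin.consEquiv fun _ : Fin (n + 1) => Bool).symm
    (fun s => if P (List.ofFn s) then 1 else 0)
    (fun p => if P (p.1 :: List.ofFn p.2) then 1 else 0)
    (by intro s; simp [Fin.consEquiv, List.ofFn_succ, Fin.tail_def]; congr)]
  rw [Fintype.sum_prod_type, Fintype.sum_bool]
  ring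

def cntF (n m : ℕ) : ℕ :=
  (Finset.univ.filter fun s : Fin n → Bool =>
    (oneRuns (List.ofFn s)).length = m ∧ (List.ofFn s).headI = false).card

def cntT (n m : ℕ) : ℕ :=
  (Finset.univ.filter fun s : Fin n → Bool =>
    (oneRuns (List.ofFn s)).length = m ∧ (List.ofFn s).headI = true).card

lemma split (n m : ℕ) :
    (Finset.univ.filter fun s : Fin n → Bool =>
      (oneRuns (List.ofFn s)).length = m).card = cntF n m + cntT n m := by
  rw [cntF, cntT, Finset.card_filter, Finset.card_filter, Finset.card_filter,
    ← Finset.sum_add_distrib]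
  congr 1
  funext s
  cases h : (List.ofFn s).headI <;> simp [h] <;> split <;> simp

lemma cntF_succ (n m : ℕ) : cntF (n + 1) m = cntF n m + cntT n m := by
  rw [cntF,
    card_succ (fun l => (oneRuns l).length = m ∧ l.headI = false), ← split]
  have h2 : (Finset.univ.filter fun s : Fin n → Bool =>
      (oneRuns (true :: List.ofFn s)).length = m
        ∧ (true :: List.ofFn s).headI = false).card = 0 := by
    simp
  rw [h2, add_zero]
  congr 1
  apply Finset.filter_congr
  intro s _
  simp [numRuns_cons]

lemma cntT_succ_zero (n : ℕ) : cntT (n + 1) 0 = cntT n 0 := by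
  rw [cntT,
    card_succ (fun l => (oneRuns l).length = 0 ∧ l.headI = true), cntT]
  have h1 : (Finset.univ.filter fun s : Fin n → Bool =>
      (oneRuns (false :: List.ofFn s)).length = 0
        ∧ (false :: List.ofFn s).headI = true).card = 0 := by
    simp
  rw [h1, zero_add]
  congr 1
  apply Finset.filter_congr
  intro s _
  rw [numRuns_cons]
  cases h : (List.ofFn s).headI <;> simp [h]

lemma cntT_succ (n m : ℕ) : cntT (n + 1) (m + 1) = cntF n m + cntT n (m + 1) := by
  rw [cntT,
    card_succ (fun l => (oneRuns l).length = m + 1 ∧ l.headI = true)]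
  have h1 : (Finset.univ.filter fun s : Fin n → Bool =>
      (oneRuns (false :: List.ofFn s)).length = m + 1
        ∧ (false :: List.ofFn s).headI = true).card = 0 := by
    simp
  rw [h1, zero_add, cntF, cntT, Finset.card_filter, Finset.card_filter,
    Finset.card_filter, ← Finset.sum_add_distrib]
  congr 1
  funext s
  rw [numRuns_cons]
  cases h : (List.ofFn s).headI <;> simp [h]

lemma cnt_eq (n : ℕ) :
    (∀ m, cntF n m = Nat.choose n (2 * m)) ∧ cntT n 0 = 0
      ∧ ∀ m, cntT n (m + 1) = Nat.choose n (2 * m + 1) := by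
  induction n with
  | zero =>
    refine ⟨fun m => ?_, by simp [cntT, oneRuns, runs], fun m => by simp [cntT, oneRuns, runs]⟩
    cases m with
    | zero => simp [cntF, oneRuns, runs]
    | succ m =>
      rw [Nat.choose_eq_zero_of_lt (by omega)]
      simp [cntF, oneRuns, runs]
  | succ n ih =>
    obtain ⟨hF, hT0, hT⟩ := ih
    refine ⟨fun m => ?_, ?_, fun m => ?_⟩
    · rw [cntF_succ, hF]
      cases m with
      | zero => simp [hT0]
      | succ m =>
        rw [hT, show 2 * (m + 1) = (2 * m + 1) + 1 by ring, Nat.choose_succ_succ, Nat.succ_eq_add_one]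
        omega
    · rw [cntT_succ_zero, hT0]
    · rw [cntT_succ, hF, hT, Nat.choose_succ_succ, add_comm]


/-- The number of binary strings of length `n` containing exactly `m` nonnull runs of
ones equals `(n+1).choose (2*m)`. -/
theorem stmt0 (n m : ℕ) :
    (Finset.univ.filter fun s : Fin n → Bool =>
        (oneRuns (List.ofFn s)).length = m).card = (n + 1).choose (2 * m) := by
  obtain ⟨hF, hT0, hT⟩ := cnt_eq n
  rw [split, hF]
  cases m with
  | zero => simp [hT0]
  | succ m =>
    rw [hT, show 2 * (m + 1) = (2 * m + 1) + 1 by ring, Nat.choose_succ_succ, Nat.succ_eq_add_one]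
    omega
end

section
/- For 1 ≤ k ≤ n, the total number of runs of ones of length at least k, summed over all binary strings of length n, equals (n-k+2)·2^(n-k-1). -/
/-- The number of leading ones of a binary string. -/
def lead : List Bool → ℕ
  | true :: t => lead t + 1
  | _ => 0

/-- The number of runs of ones of length at least `k`. -/
def cnt (k : ℕ) (s : List Bool) : ℕ := ((oneRuns s).filter (fun x => k ≤ x)).length

lemma lead_runs : ∀ s : List Bool,
    (s = [] ∧ runs s = []) ∨
    ∃ b m rest, runs s = (b, m) :: rest ∧ lead s = (if b then m else 0) := by
  intro s
  induction s with
  | nil => left; exact ⟨rfl, rfl⟩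
  | cons b l ih =>
    right
    rcases ih with ⟨hl, hr⟩ | ⟨c, m, rest, hr, hlead⟩
    · subst hl
      refine ⟨b, 1, [], rfl, ?_⟩
      cases b <;> simp [lead]
    · by_cases hbc : b = c
      · subst hbc
        refine ⟨b, m + 1, rest, ?_, ?_⟩
        · simp [runs, hr]
        · cases b <;> simp_all [lead]
      · refine ⟨b, 1, (c, m) :: rest, ?_, ?_⟩
        · simp [runs, hr, hbc]
        · cases b <;> cases c <;> simp_all [lead]

lemma cnt_cons (k : ℕ) (hk : 1 ≤ k) (b : Bool) (s : List Bool) :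
    cnt k (b :: s) = cnt k s + (if b = true ∧ lead s = k - 1 then 1 else 0) := by
  rcases lead_runs s with ⟨hl, hr⟩ | ⟨c, m, rest, hr, hlead⟩
  · subst hl
    cases b <;>
      simp only [cnt, oneRuns, runs, lead, List.filterMap, List.filter_cons, List.filterMap_nil,
        List.filter_nil, if_true, if_false, List.length_nil, ite_true, ite_false,
        Bool.false_eq_true, false_and, true_and, decide_eq_true_eq] <;>
      split_ifs <;> simp at * <;> omega
  · by_cases hbc : b = c
    · subst hbc
      have hr2 : runs (b :: s) = (b, m + 1) :: rest := by simp [runs, hr]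
      cases b
      · simp only [cnt, oneRuns, hr2, hr, List.filterMap_cons, Bool.false_eq_true, if_false,
          false_and, ite_false, add_zero]
      · simp only [if_true] at hlead
        simp only [cnt, oneRuns, hr2, hr, List.filterMap_cons, if_true, List.filter_cons,
          decide_eq_true_eq, hlead, true_and]
        split_ifs <;> simp <;> omega
    · have hr2 : runs (b :: s) = (b, 1) :: (c, m) :: rest := by simp [runs, hr, hbc]
      cases b
      · simp only [cnt, oneRuns, hr2, hr, List.filterMap_cons, Bool.false_eq_true, if_false,
          false_and, ite_false, add_zero]
      · have hc : c = false := by cases c <;> simp_all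
        subst hc
        simp only [Bool.false_eq_true, if_false] at hlead
        simp only [cnt, oneRuns, hr2, hr, List.filterMap_cons, if_true, Bool.false_eq_true,
          if_false, List.filter_cons, decide_eq_true_eq, hlead, true_and]
        split_ifs <;> simp <;> omega

lemma runs_snd_le : ∀ (s : List Bool), ∀ p ∈ runs s, p.2 ≤ s.length := by
  intro s
  induction s with
  | nil => simp [runs]
  | cons b l ih =>
    intro p hp
    rcases hr : runs l with _ | ⟨⟨c, m⟩, rest⟩
    · rw [show runs (b :: l) = [(b,1)] by simp [runs, hr]] at hp
      simp at hp
      simp [hp]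
    · by_cases hbc : b = c
      · rw [show runs (b :: l) = (c, m+1) :: rest by simp [runs, hr, hbc]] at hp
        rcases List.mem_cons.1 hp with h | h
        · have := ih (c, m) (by rw [hr]; exact List.mem_cons_self)
          subst h; simpa using Nat.add_le_add_right this 1
        · have := ih p (by rw [hr]; exact List.mem_cons_of_mem _ h)
          simpa using Nat.le_succ_of_le this
      · rw [show runs (b :: l) = (b,1) :: (c, m) :: rest by simp [runs, hr, hbc]] at hp
        rcases List.mem_cons.1 hp with h | h
        · subst h; simp
        · have := ih p (by rw [hr]; exact h)
          simpa using Nat.le_succ_of_le this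

lemma cnt_eq_zero {k : ℕ} {s : List Bool} (h : s.length < k) : cnt k s = 0 := by
  rw [cnt, List.length_eq_zero_iff, List.filter_eq_nil_iff]
  intro a ha
  simp only [decide_eq_true_eq]
  rcases List.mem_filterMap.1 ha with ⟨⟨c, m⟩, hp, hm⟩
  have := runs_snd_le s _ hp
  by_cases hc : c = true <;> simp [hc] at hm
  subst hm
  omega

lemma lead_cons (b : Bool) (s : List Bool) :
    lead (b :: s) = if b then lead s + 1 else 0 := by
  cases b <;> simp [lead]

lemma sum_cons (f : List Bool → ℕ) (n : ℕ) :
    ∑ s : Fin (n+1) → Bool, f (List.ofFn s)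
      = ∑ b : Bool, ∑ t : Fin n → Bool, f (b :: List.ofFn t) := by
  calc ∑ s : Fin (n+1) → Bool, f (List.ofFn s)
      = ∑ p : Bool × (Fin n → Bool), f (List.ofFn ((Fin.consEquiv (fun _ : Fin (n+1) => Bool)) p)) :=
        ((Fin.consEquiv (fun _ : Fin (n+1) => Bool)).sum_comp (fun s => f (List.ofFn s))).symm
    _ = ∑ b : Bool, ∑ t : Fin n → Bool, f (b :: List.ofFn t) := by
        rw [Fintype.sum_prod_type]
        refine Finset.sum_congr rfl fun b _ => Finset.sum_congr rfl fun t _ => ?_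
        congr 1
        simp [Fin.consEquiv, List.ofFn_succ, Fin.cons]

/-- Number of strings of length `n` with exactly `j` leading ones. -/
def L (n j : ℕ) : ℕ := ∑ t : Fin n → Bool, if lead (List.ofFn t) = j then 1 else 0

lemma L_eq : ∀ n j, j ≤ n → L n j = if j = n then 1 else 2 ^ (n - j - 1) := by
  intro n
  induction n with
  | zero => intro j hj; interval_cases j; simp [L, lead]
  | succ n ih =>
    intro j hj
    rw [L, sum_cons (fun l => if lead l = j then 1 else 0) n]
    simp only [Fintype.sum_bool, lead_cons, Bool.false_eq_true, if_true, if_false, ite_true,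
      ite_false]
    rcases j with _ | j'
    · simp [Finset.card_univ]
    · have h1 : (∑ t : Fin n → Bool, if lead (List.ofFn t) + 1 = j' + 1 then 1 else 0)
          = L n j' := by
        rw [L]; refine Finset.sum_congr rfl fun t _ => ?_; simp
      have h2 : (∑ t : Fin n → Bool, if (0:ℕ) = j' + 1 then 1 else 0) = 0 := by simp
      rw [h1, h2, add_zero, ih j' (by omega)]
      have he : n + 1 - (j' + 1) - 1 = n - j' - 1 := by omega
      rw [he]
      split_ifs <;> first | rfl | omega

/-- Total count over all strings of length `n`. -/
def F (n k : ℕ) : ℕ := ∑ s : Fin n → Bool, cnt k (List.ofFn s)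

lemma F_lt {n k : ℕ} (h : n < k) : F n k = 0 := by
  refine Finset.sum_eq_zero fun s _ => cnt_eq_zero ?_
  simpa using h

lemma F_succ (k : ℕ) (hk : 1 ≤ k) (n : ℕ) : F (n+1) k = 2 * F n k + L n (k - 1) := by
  rw [F, sum_cons (cnt k) n]
  simp only [Fintype.sum_bool]
  have ht : (∑ t : Fin n → Bool, cnt k (true :: List.ofFn t)) = F n k + L n (k - 1) := by
    rw [F, L, ← Finset.sum_add_distrib]
    refine Finset.sum_congr rfl fun t _ => ?_
    rw [cnt_cons k hk]
    simp
  have hf : (∑ t : Fin n → Bool, cnt k (false :: List.ofFn t)) = F n k := by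
    rw [F]
    refine Finset.sum_congr rfl fun t _ => ?_
    rw [cnt_cons k hk]
    simp
  rw [ht, hf]
  ring

lemma F_formula (k : ℕ) (hk : 1 ≤ k) :
    ∀ n, k ≤ n → (F n k : ℚ) = ((n : ℚ) - k + 2) * 2 ^ ((n : ℤ) - k - 1) := by
  intro n hn
  induction n, hn using Nat.le_induction with
  | base =>
    have h1 : F k k = 1 := by
      have hs := F_succ k hk (k - 1)
      rw [show k - 1 + 1 = k from by omega] at hs
      rw [hs, F_lt (by omega), L_eq (k-1) (k-1) le_rfl]
      simp
    rw [h1]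
    have h2 : ((k : ℤ) - k - 1) = -1 := by ring
    rw [h2]
    have h3 : ((k : ℚ) - k + 2) = 2 := by ring
    rw [h3, zpow_neg_one]
    norm_num
  | succ n hn ih =>
    have hF : F (n+1) k = 2 * F n k + 2 ^ (n - k) := by
      rw [F_succ k hk n, L_eq n (k-1) (by omega), if_neg (by omega)]
      congr 2
      omega
    rw [hF]
    push_cast [ih]
    have hz : (2:ℚ) ^ ((n - k : ℕ)) = 2 ^ ((n:ℤ) - k - 1) * 2 := by
      rw [← zpow_natCast, show ((n - k : ℕ) : ℤ) = ((n:ℤ) - k - 1) + 1 by omega,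
        zpow_add_one₀ (by norm_num)]
    have hz2 : (2:ℚ) ^ ((n:ℤ) + 1 - k - 1) = 2 ^ ((n:ℤ) - k - 1) * 2 := by
      rw [show ((n:ℤ) + 1 - k - 1) = ((n:ℤ) - k - 1) + 1 by ring,
        zpow_add_one₀ (by norm_num)]
    rw [hz, hz2]
    ring

/-- For `1 ≤ k ≤ n`, the total number of runs of ones of length at least `k`, summed over
all binary strings of length `n`, equals `(n-k+2) * 2^(n-k-1)`. -/
theorem stmt8 (n k : ℕ) (hk : 1 ≤ k) (hkn : k ≤ n) :
    ((∑ s : Fin n → Bool,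
        ((oneRuns (List.ofFn s)).filter (fun x => k ≤ x)).length : ℕ) : ℚ)
      = ((n : ℚ) - k + 2) * 2 ^ ((n : ℤ) - k - 1) := by
  exact F_formula k hk n hkn
end

section
/- For k ≥ 1, the number of binary strings of length n whose longest maximal run (of ones or zeros) has length at most k equals twice the number of binary strings of length n-1 whose longest run of ones has length at most k-1, for all n ≥ 1. -/
section Aux
def bderiv (l : List Bool) : List Bool := List.zipWith (· == ·) l l.tail

def gfn : Bool × ℕ → Option ℕ := fun p => if 2 ≤ p.2 then some (p.2 - 1) else none

lemma runs_cons_head_s16 (x : Bool) (l : List Bool) : ∃ m rest, runs (x :: l) = (x, m) :: rest ∧ 1 ≤ m := by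
  rw [runs_cons]
  cases h : runs l with
  | nil => exact ⟨1, [], rfl, le_refl 1⟩
  | cons p rest =>
    obtain ⟨c, k⟩ := p
    by_cases hc : x = c
    · exact ⟨k+1, rest, by subst hc; simp, by omega⟩
    · exact ⟨1, (c,k) :: rest, by simp [hc], le_refl 1⟩

lemma oneRuns_false (t : List Bool) : oneRuns (false :: t) = oneRuns t := by
  unfold oneRuns
  rw [runs_cons]
  cases h : runs t with
  | nil => simp
  | cons p rest =>
    obtain ⟨c, k⟩ := p
    cases c <;> simp

lemma runs_replicate_true (a : ℕ) (t : List Bool)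
    (h : t = [] ∨ t.head? = some false) :
    runs (List.replicate a true ++ t) = if a = 0 then runs t else (true, a) :: runs t := by
  induction a with
  | zero => simp
  | succ a ih =>
    rw [List.replicate_succ, List.cons_append, runs_cons]
    rcases Nat.eq_zero_or_pos a with ha | ha
    · subst ha
      simp only [List.replicate_zero, List.nil_append]
      rcases h with h | h
      · subst h; simp [runs]
      · obtain ⟨y, t', rfl⟩ : ∃ y t', t = y :: t' := by
          cases t with
          | nil => simp at h
          | cons y t' => exact ⟨y, t', rfl⟩
        simp only [List.head?_cons, Option.some.injEq] at h
        subst h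
        obtain ⟨m, rest, hr, hm⟩ := runs_cons_head_s16 false t'
        rw [hr]; simp
    · have hne : ¬ (a = 0) := by omega
      simp only [hne, if_false] at ih
      rw [ih]; simp

lemma oneRuns_replicate_true (a : ℕ) (t : List Bool)
    (h : t = [] ∨ t.head? = some false) :
    oneRuns (List.replicate a true ++ t) = (if a = 0 then [] else [a]) ++ oneRuns t := by
  unfold oneRuns
  rw [runs_replicate_true a t h]
  rcases Nat.eq_zero_or_pos a with ha | ha
  · simp [ha]
  · have : ¬ (a = 0) := by omega
    simp [this]

lemma main_lemma (l : List Bool) : ∀ x : Bool, ∃ m rest d,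
    runs (x :: l) = (x, m) :: rest ∧ 1 ≤ m ∧
    bderiv (x :: l) = List.replicate (m - 1) true ++ d ∧
    (d = [] ∨ d.head? = some false) ∧
    oneRuns d = rest.filterMap gfn := by
  induction l with
  | nil =>
    intro x
    exact ⟨1, [], [], rfl, le_refl 1, rfl, Or.inl rfl, rfl⟩
  | cons y l' ih =>
    intro x
    obtain ⟨m, rest, d, h1, h2, h3, h4, h5⟩ := ih y
    by_cases hxy : x = y
    · subst hxy
      refine ⟨m + 1, rest, d, ?_, by omega, ?_, h4, h5⟩
      · rw [runs_cons, h1]; simp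
      · have hb : bderiv (x :: x :: l') = true :: bderiv (x :: l') := by
          show (x == x) :: _ = _
          simp [bderiv]
        rw [hb, h3]
        have hm : m + 1 - 1 = (m - 1) + 1 := by omega
        rw [hm, List.replicate_succ, List.cons_append]
    · refine ⟨1, (y, m) :: rest, false :: bderiv (y :: l'), ?_, le_refl 1, ?_, ?_, ?_⟩
      · rw [runs_cons, h1]; simp [hxy]
      · have hb : bderiv (x :: y :: l') = (x == y) :: bderiv (y :: l') := rfl
        rw [hb]
        have hxy' : (x == y) = false := by
          cases x <;> cases y <;> simp_all
        rw [hxy']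
        simp
      · right; rfl
      · rw [oneRuns_false, h3, oneRuns_replicate_true _ _ h4, h5]
        show _ = List.filterMap gfn ((y, m) :: rest)
        rw [List.filterMap_cons]
        rcases Nat.lt_or_ge m 2 with hm | hm
        · have hm1 : m = 1 := by omega
          simp [gfn, hm1]
        · have : ¬ (m - 1 = 0) := by omega
          simp [gfn, this, hm]

lemma oneRuns_bderiv (x : Bool) (l : List Bool) :
    oneRuns (bderiv (x :: l)) = (runs (x :: l)).filterMap gfn := by
  obtain ⟨m, rest, d, h1, h2, h3, h4, h5⟩ := main_lemma l x
  rw [h3, oneRuns_replicate_true _ _ h4, h5, h1, List.filterMap_cons]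
  rcases Nat.lt_or_ge m 2 with hm | hm
  · have hm1 : m = 1 := by omega
    simp [gfn, hm1]
  · have : ¬ (m - 1 = 0) := by omega
    simp [gfn, this, hm]

lemma iff_key (k : ℕ) (hk : 1 ≤ k) (x : Bool) (l : List Bool) :
    (∀ p ∈ runs (x :: l), p.2 ≤ k) ↔ (∀ v ∈ oneRuns (bderiv (x :: l)), v ≤ k - 1) := by
  rw [oneRuns_bderiv]
  constructor
  · intro h v hv
    rw [List.mem_filterMap] at hv
    obtain ⟨p, hp, hg⟩ := hv
    unfold gfn at hg
    split at hg
    · have := h p hp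
      simp only [Option.some.injEq] at hg
      omega
    · simp at hg
  · intro h p hp
    rcases Nat.lt_or_ge p.2 2 with h2 | h2
    · omega
    · have : p.2 - 1 ∈ (runs (x :: l)).filterMap gfn := by
        rw [List.mem_filterMap]
        exact ⟨p, hp, by simp [gfn, h2]⟩
      have := h _ this
      omega

lemma bderiv_ofFn (m : ℕ) (s : Fin (m+1) → Bool) :
    bderiv (List.ofFn s) = List.ofFn (fun i : Fin m => s i.castSucc == s i.succ) := by
  apply List.ext_getElem
  · simp [bderiv]
  · intro i h1 h2
    simp only [bderiv, List.getElem_zipWith, List.getElem_ofFn, List.getElem_tail]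
    congr 1

def jfun (b : Bool) {m : ℕ} (t : Fin m → Bool) : Fin (m+1) → Bool :=
  fun i => ((List.ofFn t).take i.val).foldl (· == ·) b

lemma jfun_zero (b : Bool) {m : ℕ} (t : Fin m → Bool) : jfun b t 0 = b := by
  simp [jfun]

lemma jfun_succ (b : Bool) {m : ℕ} (t : Fin m → Bool) (i : Fin m) :
    jfun b t i.succ = (jfun b t i.castSucc == t i) := by
  unfold jfun
  have h1 : (i.succ : Fin (m+1)).val = i.val + 1 := rfl
  have h2 : (i.castSucc : Fin (m+1)).val = i.val := rfl
  rw [h1, h2, List.take_succ]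
  have : (List.ofFn t)[i.val]? = some (t i) := by
    rw [List.getElem?_eq_getElem (by simp)]
    simp
  rw [this]
  simp [List.foldl_append]

lemma beq_beq_right (a c : Bool) : (a == (a == c)) = c := by cases a <;> cases c <;> rfl

/-- key iff at the level of functions -/
lemma key2 (m k : ℕ) (hk : 1 ≤ k) (s : Fin (m+1) → Bool) :
    (∀ p ∈ runs (List.ofFn s), p.2 ≤ k) ↔
      (∀ v ∈ oneRuns (List.ofFn fun i : Fin m => s i.castSucc == s i.succ), v ≤ k - 1) := by
  rw [← bderiv_ofFn]
  rw [List.ofFn_succ]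
  exact iff_key k hk _ _

end Aux

/-- For `k ≥ 1` and `n ≥ 1`, the number of binary strings of length `n` whose longest
maximal run (of ones or zeros) has length at most `k` equals twice the number of binary
strings of length `n-1` whose longest run of ones has length at most `k-1`. -/
theorem stmt16 (n k : ℕ) (hk : 1 ≤ k) (hn : 1 ≤ n) :
    (Finset.univ.filter fun s : Fin n → Bool =>
        ∀ p ∈ runs (List.ofFn s), p.2 ≤ k).card
      = 2 * (Finset.univ.filter fun s : Fin (n - 1) → Bool =>
          ∀ x ∈ oneRuns (List.ofFn s), x ≤ k - 1).card := by
  obtain ⟨m, rfl⟩ : ∃ m, n = m + 1 := ⟨n - 1, by omega⟩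
  simp only [Nat.add_sub_cancel]
  have hcard : (Finset.univ.filter fun s : Fin (m+1) → Bool =>
        ∀ p ∈ runs (List.ofFn s), p.2 ≤ k).card
      = (Finset.univ.filter fun p : Bool × (Fin m → Bool) =>
        ∀ x ∈ oneRuns (List.ofFn p.2), x ≤ k - 1).card := by
    apply Finset.card_bij'
      (i := fun s _ => (s 0, fun i : Fin m => s i.castSucc == s i.succ))
      (j := fun p _ => jfun p.1 p.2)
    · intro s hs
      simp only [Finset.mem_filter, Finset.mem_univ, true_and] at hs ⊢
      exact (key2 m k hk s).mp hs
    · intro p hp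
      simp only [Finset.mem_filter, Finset.mem_univ, true_and] at hp ⊢
      rw [key2 m k hk]
      have he : (fun i : Fin m => jfun p.1 p.2 i.castSucc == jfun p.1 p.2 i.succ) = p.2 := by
        funext i
        rw [jfun_succ, beq_beq_right]
      rw [he]
      exact hp
    · intro s _
      funext i
      induction i using Fin.induction with
      | zero => rw [jfun_zero]
      | succ i ihi =>
        rw [jfun_succ, ihi, beq_beq_right]
    · intro p _
      obtain ⟨b, t⟩ := p
      simp only [Prod.mk.injEq]
      constructor
      · exact jfun_zero b t
      · funext i
        rw [jfun_succ, beq_beq_right]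
  rw [hcard]
  have hprod : (Finset.univ.filter fun p : Bool × (Fin m → Bool) =>
        ∀ x ∈ oneRuns (List.ofFn p.2), x ≤ k - 1)
      = Finset.univ ×ˢ (Finset.univ.filter fun t : Fin m → Bool =>
        ∀ x ∈ oneRuns (List.ofFn t), x ≤ k - 1) := by
    ext ⟨b, t⟩
    simp [Finset.mem_product]
  rw [hprod, Finset.card_product, Finset.card_univ, Fintype.card_bool]
  rfl
end

section
/- For k ≥ 1 and all n ≥ 0 and r ≥ 0, the number of binary strings of length n with Hamming weight r whose longest run of ones has length at most k equals the sum over p from 0 to floor(r/(k+1)) of (-1)^p·binomial(n - p(k+1), n-r)·binomial(n-r+1, p). -/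
/-- The binomial coefficient on integers: `zchoose a b = C(a,b)` for `0 ≤ b ≤ a`,
and `0` whenever `b < 0` or `a < b`. -/
def zchoose (a b : ℤ) : ℤ :=
  if 0 ≤ b ∧ b ≤ a then (a.toNat.choose b.toNat : ℤ) else 0


def word : List ℕ → List Bool
  | [] => []
  | [x] => List.replicate x true
  | x :: y :: xs => List.replicate x true ++ false :: word (y :: xs)
def gaps : List Bool → List ℕ
  | [] => [0]
  | false :: l => 0 :: gaps l
  | true :: l =>
    match gaps l with
    | [] => [1]
    | g :: gs => (g + 1) :: gs
lemma gaps_ne_nil (l : List Bool) : gaps l ≠ [] := by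
  cases l with
  | nil => simp [gaps]
  | cons b l =>
    cases b
    · simp [gaps]
    · simp only [gaps]
      cases gaps l <;> simp
lemma gaps_replicate (x : ℕ) : gaps (List.replicate x true) = [x] := by
  induction x with
  | zero => simp [gaps]
  | succ x ih => rw [List.replicate_succ]; simp [gaps, ih]
lemma gaps_append (x : ℕ) (t : List Bool) :
    gaps (List.replicate x true ++ false :: t) = x :: gaps t := by
  induction x with
  | zero => simp [gaps]
  | succ x ih => rw [List.replicate_succ, List.cons_append]; simp [gaps, ih]

lemma word_gaps (l : List Bool) : word (gaps l) = l := by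
  induction l with
  | nil => simp [gaps, word]
  | cons b l ih =>
    cases b
    · have h := gaps_ne_nil l
      obtain ⟨g, gs, hg⟩ : ∃ g gs, gaps l = g :: gs := by
        cases h' : gaps l with
        | nil => exact absurd h' h
        | cons g gs => exact ⟨g, gs, rfl⟩
      simp only [gaps, hg, word]
      rw [hg] at ih
      simp [ih]
    · obtain ⟨g, gs, hg⟩ : ∃ g gs, gaps l = g :: gs := by
        cases h' : gaps l with
        | nil => exact absurd h' (gaps_ne_nil l)
        | cons g gs => exact ⟨g, gs, rfl⟩
      simp only [gaps, hg]
      rw [hg] at ih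
      cases gs with
      | nil =>
        simp only [word] at ih ⊢
        rw [List.replicate_succ, ih]
      | cons y ys =>
        simp only [word] at ih ⊢
        rw [List.replicate_succ, List.cons_append, ih]

lemma gaps_word (x : ℕ) (xs : List ℕ) : gaps (word (x :: xs)) = x :: xs := by
  induction xs generalizing x with
  | nil => simp [word, gaps_replicate]
  | cons y ys ih => simp only [word]; rw [gaps_append, ih]

lemma count_true_word : ∀ xs : List ℕ, (word xs).count true = xs.sum
  | [] => by simp [word]
  | [x] => by simp [word]
  | x :: y :: xs => by
    simp only [word, List.count_append, List.count_cons]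
    have := count_true_word (y :: xs)
    simp [this, List.sum_cons]

lemma length_word : ∀ (x : ℕ) (xs : List ℕ),
    (word (x :: xs)).length = (x :: xs).sum + xs.length
  | x, [] => by simp [word]
  | x, y :: ys => by
    simp only [word, List.length_append, List.length_cons, List.length_replicate]
    have := length_word y ys
    rw [this]
    simp [List.sum_cons]
    ring

lemma runs_eq_nil_iff (l : List Bool) : runs l = [] ↔ l = [] := by
  cases l with
  | nil => simp [runs]
  | cons b l =>
    rw [runs_cons]
    rcases h : runs l with _ | ⟨⟨c, j⟩, rest⟩
    · simp
    · show (if b = c then (c, j + 1) :: rest else (b, 1) :: (c, j) :: rest) = [] ↔ b :: l = []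
      split <;> simp

lemma runs_head (b : Bool) (l : List Bool) : ∃ j rest, runs (b :: l) = (b, j) :: rest := by
  induction l generalizing b with
  | nil => exact ⟨1, [], rfl⟩
  | cons c l ih =>
    obtain ⟨j, rest, hj⟩ := ih c
    rw [runs_cons b (c :: l), hj]
    by_cases hbc : b = c
    · subst hbc
      exact ⟨j + 1, rest, by simp⟩
    · exact ⟨1, (c, j) :: rest, by simp [hbc]⟩

lemma oneRuns_false_cons (l : List Bool) : oneRuns (false :: l) = oneRuns l := by
  unfold oneRuns
  cases l with
  | nil => simp [runs]
  | cons c l =>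
    obtain ⟨j, rest, hj⟩ := runs_head c l
    rw [runs_cons false (c :: l), hj]
    cases c <;> simp [hj]

lemma runs_replicate (x : ℕ) : runs (List.replicate (x + 1) true) = [(true, x + 1)] := by
  induction x with
  | zero => simp [runs]
  | succ x ih =>
    rw [List.replicate_succ, runs_cons, ih]
    simp

lemma runs_replicate_append (x : ℕ) (t : List Bool) :
    runs (List.replicate (x + 1) true ++ false :: t) = (true, x + 1) :: runs (false :: t) := by
  induction x with
  | zero =>
    obtain ⟨j, rest, hj⟩ := runs_head false t
    simp only [List.replicate_succ, List.replicate_zero, List.nil_append, List.cons_append]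
    rw [runs_cons true (false :: t), hj]
    simp [hj]
  | succ x ih =>
    rw [List.replicate_succ, List.cons_append, runs_cons, ih]
    simp

lemma oneRuns_word : ∀ (x : ℕ) (xs : List ℕ),
    oneRuns (word (x :: xs)) = (x :: xs).filter (fun a => a ≠ 0)
  | x, [] => by
    cases x with
    | zero => simp [word, oneRuns, runs]
    | succ x => simp [word, oneRuns, runs_replicate]
  | 0, y :: ys => by
    simp only [word, List.replicate_zero, List.nil_append]
    rw [oneRuns_false_cons]
    have := oneRuns_word y ys
    rw [this]
    simp
  | (x+1), y :: ys => by
    simp only [word]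
    unfold oneRuns
    rw [runs_replicate_append]
    have h2 : (runs (false :: word (y :: ys))).filterMap
        (fun p => if p.1 then some p.2 else none) = oneRuns (word (y :: ys)) := by
      rw [← oneRuns_false_cons (word (y :: ys))]
      rfl
    simp only [List.filterMap_cons, if_pos rfl]
    rw [h2, oneRuns_word y ys]
    simp

lemma ofFn_getD {α : Type*} {n : ℕ} (l : List α) (d : α) (h : l.length = n) :
    List.ofFn (fun i : Fin n => l.getD i d) = l := by
  subst h
  apply List.ext_getElem
  · simp
  · intro i h1 h2
    simp [List.getD_eq_getElem]


lemma AT_succ_eq (k n : ℕ) : Finset.Nat.antidiagonalTuple (k+1) n =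
    (Finset.range (n+1)).biUnion fun j =>
      (Finset.Nat.antidiagonalTuple k (n - j)).image (fun g : Fin k → ℕ => Fin.cons j g) := by
  ext f
  simp only [Finset.Nat.mem_antidiagonalTuple, Finset.mem_biUnion, Finset.mem_range,
    Finset.mem_image]
  constructor
  · intro hf
    refine ⟨f 0, ?_, Fin.tail f, ?_, Fin.cons_self_tail f⟩
    · rw [← hf, Fin.sum_univ_succ]; omega
    · rw [← hf, Fin.sum_univ_succ]
      simp only [Fin.tail]
      omega
  · rintro ⟨j, hj, g, hg, rfl⟩
    rw [Fin.sum_univ_succ]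
    simp only [Fin.cons_zero, Fin.cons_succ]
    omega

lemma card_AT : ∀ (M r : ℕ), (Finset.Nat.antidiagonalTuple (M+1) r).card = (r + M).choose M := by
  intro M
  induction M with
  | zero => intro r; simp
  | succ M ih =>
    intro r
    have hdisj : ∀ a ∈ Finset.range (r+1), ∀ b ∈ Finset.range (r+1), a ≠ b →
        Disjoint ((Finset.Nat.antidiagonalTuple (M+1) (r - a)).image
            (fun g : Fin (M+1) → ℕ => (Fin.cons a g : Fin (M+2) → ℕ)))
          ((Finset.Nat.antidiagonalTuple (M+1) (r - b)).image
            (fun g : Fin (M+1) → ℕ => (Fin.cons b g : Fin (M+2) → ℕ))) := by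
      intro a _ b _ hab
      apply Finset.disjoint_left.mpr
      rintro f hf hg
      simp only [Finset.mem_image] at hf hg
      obtain ⟨x, _, rfl⟩ := hf
      obtain ⟨y, _, hy⟩ := hg
      apply hab
      have := congrArg (fun f => f 0) hy
      simpa using this.symm
    rw [AT_succ_eq, Finset.card_biUnion hdisj]
    rw [Finset.sum_congr rfl (fun j (_ : j ∈ Finset.range (r+1)) => by
      rw [Finset.card_image_of_injective _ (fun a b hab => by
        have := congrArg Fin.tail hab
        simpa using this), ih] :
      ∀ j ∈ Finset.range (r+1),
        ((Finset.Nat.antidiagonalTuple (M+1) (r - j)).image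
          (fun g : Fin (M+1) → ℕ => (Fin.cons j g : Fin (M+2) → ℕ))).card = ((r - j) + M).choose M)]
    have h2 := Finset.sum_range_reflect (fun i => (i + M).choose M) (r + 1)
    simp only [Nat.add_sub_cancel] at h2
    rw [h2, Nat.sum_range_add_choose, Nat.add_assoc]

lemma card_shift (M r k : ℕ) (t : Finset (Fin M)) :
    ((Finset.Nat.antidiagonalTuple M r).filter fun f => ∀ i ∈ t, k + 1 ≤ f i).card
    = if t.card * (k+1) ≤ r then
        (Finset.Nat.antidiagonalTuple M (r - t.card * (k+1))).card else 0 := by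
  have hsume : ∀ f : Fin M → ℕ, ∑ i ∈ t, (k+1) ≤ ∑ i, f i → True := fun _ _ => trivial
  split
  · next h =>
    apply Finset.card_bij'
      (i := fun f _ => fun i => f i - (if i ∈ t then k+1 else 0))
      (j := fun g _ => fun i => g i + (if i ∈ t then k+1 else 0))
    · intro f hf
      simp only [Finset.mem_filter, Finset.Nat.mem_antidiagonalTuple] at hf ⊢
      obtain ⟨hsum, hbig⟩ := hf
      have hle : ∀ i ∈ Finset.univ, (if i ∈ t then k+1 else 0) ≤ f i := by
        intro i _
        split
        · next hi => exact hbig i hi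
        · exact Nat.zero_le _
      rw [Finset.sum_tsub_distrib Finset.univ hle, hsum]
      congr 1
      rw [Finset.sum_ite_mem, Finset.univ_inter, Finset.sum_const, smul_eq_mul]
    · intro g hg
      simp only [Finset.mem_filter, Finset.Nat.mem_antidiagonalTuple] at hg ⊢
      constructor
      · rw [Finset.sum_add_distrib, hg]
        rw [Finset.sum_ite_mem, Finset.univ_inter, Finset.sum_const, smul_eq_mul]
        omega
      · intro i hi
        simp [hi]
    · intro f hf
      simp only [Finset.mem_filter, Finset.Nat.mem_antidiagonalTuple] at hf
      funext i
      by_cases hi : i ∈ t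
      · have := hf.2 i hi
        simp [hi]
        omega
      · simp [hi]
    · intro g hg
      funext i
      by_cases hi : i ∈ t <;> simp [hi]
  · next h =>
    rw [Finset.card_eq_zero, Finset.eq_empty_iff_forall_notMem]
    intro f hf
    simp only [Finset.mem_filter, Finset.Nat.mem_antidiagonalTuple] at hf
    obtain ⟨hsum, hbig⟩ := hf
    apply h
    calc t.card * (k+1) = ∑ i ∈ t, (k+1) := by rw [Finset.sum_const, smul_eq_mul]
    _ ≤ ∑ i ∈ t, f i := Finset.sum_le_sum fun i hi => hbig i hi
    _ ≤ ∑ i, f i := Finset.sum_le_sum_of_subset (Finset.subset_univ t)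
    _ = r := hsum

lemma ie (M r k : ℕ) :
    (((Finset.Nat.antidiagonalTuple M r).filter fun f => ∀ i, f i ≤ k).card : ℤ)
    = ∑ t ∈ (Finset.univ : Finset (Fin M)).powerset,
        (-1 : ℤ)^t.card *
          (((Finset.Nat.antidiagonalTuple M r).filter fun f => ∀ i ∈ t, k+1 ≤ f i).card : ℤ) := by
  rw [Finset.card_filter]
  push_cast
  have step1 : ∀ f : Fin M → ℕ,
      (if (∀ i, f i ≤ k) then (1:ℤ) else 0)
        = ∏ i : Fin M, ((-(if k+1 ≤ f i then (1:ℤ) else 0)) + 1) := by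
    intro f
    have : ∀ i : Fin M, (-(if k+1 ≤ f i then (1:ℤ) else 0)) + 1
        = if f i ≤ k then (1:ℤ) else 0 := by
      intro i
      by_cases h : f i ≤ k
      · rw [if_pos h, if_neg (by omega)]; ring
      · rw [if_neg h, if_pos (by omega)]; ring
    rw [Finset.prod_congr rfl fun i _ => this i, Finset.prod_boole]
    simp
  rw [Finset.sum_congr rfl fun f _ => step1 f]
  have step2 : ∀ f : Fin M → ℕ,
      ∏ i : Fin M, ((-(if k+1 ≤ f i then (1:ℤ) else 0)) + 1)
        = ∑ t ∈ (Finset.univ : Finset (Fin M)).powerset,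
            (-1:ℤ)^t.card * (if (∀ i ∈ t, k+1 ≤ f i) then (1:ℤ) else 0) := by
    intro f
    rw [Finset.prod_add]
    apply Finset.sum_congr rfl
    intro t _
    rw [Finset.prod_const_one, mul_one]
    rw [show (∏ i ∈ t, -(if k+1 ≤ f i then (1:ℤ) else 0))
        = ∏ i ∈ t, ((-1) * (if k+1 ≤ f i then (1:ℤ) else 0)) by
          apply Finset.prod_congr rfl; intro i _; ring]
    rw [Finset.prod_mul_distrib, Finset.prod_const, Finset.prod_boole]
    congr 1
    by_cases h : ∀ i ∈ t, k + 1 ≤ f i <;> simp [h]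
  rw [Finset.sum_congr rfl fun f _ => step2 f, Finset.sum_comm]
  apply Finset.sum_congr rfl
  intro t _
  rw [← Finset.mul_sum]
  congr 1
  rw [Finset.sum_boole, Finset.card_filter]

lemma count_bounded (m r k : ℕ) :
    (((Finset.Nat.antidiagonalTuple (m+1) r).filter fun f => ∀ i, f i ≤ k).card : ℤ)
    = ∑ p ∈ Finset.range (m+2), ((m+1).choose p : ℤ) *
        ((-1:ℤ)^p * (if p*(k+1) ≤ r then ((r - p*(k+1) + m).choose m : ℤ) else 0)) := by
  rw [ie]
  have hterm : ∀ t ∈ (Finset.univ : Finset (Fin (m+1))).powerset,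
      (-1 : ℤ)^t.card *
        (((Finset.Nat.antidiagonalTuple (m+1) r).filter fun f => ∀ i ∈ t, k+1 ≤ f i).card : ℤ)
      = (fun p => (-1:ℤ)^p * (if p*(k+1) ≤ r then ((r - p*(k+1) + m).choose m : ℤ) else 0)) t.card := by
    intro t _
    simp only
    congr 1
    rw [card_shift]
    split
    · rw [card_AT]
    · rfl
  rw [Finset.sum_congr rfl hterm,
    Finset.sum_powerset_apply_card
      (fun p => (-1:ℤ)^p * (if p*(k+1) ≤ r then ((r - p*(k+1) + m).choose m : ℤ) else 0))]
  simp only [Finset.card_univ, Fintype.card_fin, nsmul_eq_mul]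

lemma getD_ofFn {α : Type*} {n : ℕ} (s : Fin n → α) (a : Fin n) (d : α) :
    (List.ofFn s).getD (a : ℕ) d = s a := by
  rw [List.getD_eq_getElem _ _ (by simpa using a.isLt), List.getElem_ofFn]

lemma zchoose_coe (a b : ℕ) : zchoose (a : ℤ) (b : ℤ) = (a.choose b : ℤ) := by
  unfold zchoose
  split
  · next h =>
    congr 1 <;> simp
  · next h =>
    push_neg at h
    have hb : (b:ℤ) ≤ a → False := by intro hh; exact absurd (h (by positivity)) (not_lt.mpr hh)
    have : a < b := by by_contra hc; exact hb (by exact_mod_cast not_lt.mp hc)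
    rw [Nat.choose_eq_zero_of_lt this]
    simp

lemma sum_gaps (l : List Bool) : (gaps l).sum = l.count true := by
  conv_rhs => rw [← word_gaps l]
  rw [count_true_word]

lemma card_strings (n r k m : ℕ) (hm : n = r + m) :
    (Finset.univ.filter fun s : Fin n → Bool =>
        (List.ofFn s).count true = r ∧ ∀ x ∈ oneRuns (List.ofFn s), x ≤ k).card
    = ((Finset.Nat.antidiagonalTuple (m+1) r).filter fun f => ∀ i, f i ≤ k).card := by
  have hglen : ∀ s : Fin n → Bool, (List.ofFn s).count true = r →
      (gaps (List.ofFn s)).length = m + 1 := by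
    intro s hc
    obtain ⟨g, gs, hg⟩ : ∃ g gs, gaps (List.ofFn s) = g :: gs := by
      cases h' : gaps (List.ofFn s) with
      | nil => exact absurd h' (gaps_ne_nil _)
      | cons g gs => exact ⟨g, gs, rfl⟩
    have hw : word (g :: gs) = List.ofFn s := by rw [← hg, word_gaps]
    have hlen : (word (g :: gs)).length = (g :: gs).sum + gs.length := length_word g gs
    have hsum : (g :: gs).sum = r := by rw [← hg, sum_gaps, hc]
    rw [hw, List.length_ofFn] at hlen
    rw [hg]
    simp only [List.length_cons]
    omega
  have hwlen : ∀ f : Fin (m+1) → ℕ, (∑ i, f i) = r →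
      (word (List.ofFn f)).length = n := by
    intro f hf
    obtain ⟨x, xs, hx⟩ : ∃ x xs, List.ofFn f = x :: xs := by
      cases h' : List.ofFn f with
      | nil => have := congrArg List.length h'; simp at this
      | cons x xs => exact ⟨x, xs, rfl⟩
    have hsum : (x :: xs).sum = r := by rw [← hx, List.sum_ofFn, hf]
    have hlen : xs.length = m := by
      have := congrArg List.length hx
      simp at this
      omega
    rw [hx, length_word, hsum, hlen, hm]
  apply Finset.card_bij'
    (i := fun s _ => fun i : Fin (m+1) => (gaps (List.ofFn s)).getD i 0)
    (j := fun f _ => fun a : Fin n => (word (List.ofFn f)).getD a false)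
  · intro s hs
    simp only [Finset.mem_filter, Finset.mem_univ, true_and] at hs
    obtain ⟨hc, hruns⟩ := hs
    have hlen := hglen s hc
    have hofn : List.ofFn (fun i : Fin (m+1) => (gaps (List.ofFn s)).getD i 0)
        = gaps (List.ofFn s) := ofFn_getD _ _ hlen
    simp only [Finset.mem_filter, Finset.Nat.mem_antidiagonalTuple]
    constructor
    · rw [← List.sum_ofFn, hofn, sum_gaps, hc]
    · intro i
      have hi : (i : ℕ) < (gaps (List.ofFn s)).length := by rw [hlen]; exact i.isLt
      rw [List.getD_eq_getElem _ _ hi]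
      set x := (gaps (List.ofFn s))[(i:ℕ)] with hxdef
      have hmem : x ∈ gaps (List.ofFn s) := List.getElem_mem hi
      rcases Nat.eq_zero_or_pos x with h0 | h0
      · omega
      · apply hruns
        obtain ⟨g, gs, hg⟩ : ∃ g gs, gaps (List.ofFn s) = g :: gs := by
          cases h' : gaps (List.ofFn s) with
          | nil => exact absurd h' (gaps_ne_nil _)
          | cons g gs => exact ⟨g, gs, rfl⟩
        have hor : oneRuns (List.ofFn s) = (g :: gs).filter (fun a => a ≠ 0) := by
          conv_lhs => rw [← word_gaps (List.ofFn s), hg]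
          exact oneRuns_word g gs
        rw [hor, List.mem_filter]
        rw [hg] at hmem
        exact ⟨hmem, by simp; omega⟩
  · intro f hf
    simp only [Finset.mem_filter, Finset.Nat.mem_antidiagonalTuple] at hf
    obtain ⟨hsum, hbd⟩ := hf
    have hlen := hwlen f hsum
    have hofn : List.ofFn (fun a : Fin n => (word (List.ofFn f)).getD a false)
        = word (List.ofFn f) := ofFn_getD _ _ hlen
    simp only [Finset.mem_filter, Finset.mem_univ, true_and]
    obtain ⟨x, xs, hx⟩ : ∃ x xs, List.ofFn f = x :: xs := by
      cases h' : List.ofFn f with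
      | nil => have := congrArg List.length h'; simp at this
      | cons x xs => exact ⟨x, xs, rfl⟩
    constructor
    · rw [hofn, count_true_word, List.sum_ofFn]
      exact hsum
    · intro y hy
      rw [hofn, hx, oneRuns_word, List.mem_filter] at hy
      obtain ⟨hy1, _⟩ := hy
      rw [← hx, List.mem_ofFn] at hy1
      obtain ⟨i, rfl⟩ := hy1
      exact hbd i
  · intro s hs
    simp only [Finset.mem_filter, Finset.mem_univ, true_and] at hs
    obtain ⟨hc, hruns⟩ := hs
    have hlen := hglen s hc
    have hofn : List.ofFn (fun i : Fin (m+1) => (gaps (List.ofFn s)).getD i 0)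
        = gaps (List.ofFn s) := ofFn_getD _ _ hlen
    funext a
    beta_reduce
    rw [hofn, word_gaps]
    exact getD_ofFn s a false
  · intro f hf
    simp only [Finset.mem_filter, Finset.Nat.mem_antidiagonalTuple] at hf
    obtain ⟨hsum, hbd⟩ := hf
    have hlen := hwlen f hsum
    have hofn : List.ofFn (fun a : Fin n => (word (List.ofFn f)).getD a false)
        = word (List.ofFn f) := ofFn_getD _ _ hlen
    funext i
    beta_reduce
    rw [hofn]
    obtain ⟨x, xs, hx⟩ : ∃ x xs, List.ofFn f = x :: xs := by
      cases h' : List.ofFn f with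
      | nil => have := congrArg List.length h'; simp at this
      | cons x xs => exact ⟨x, xs, rfl⟩
    rw [hx, gaps_word, ← hx]
    exact getD_ofFn f i 0


/-- For `k ≥ 1` and all `n, r`, the number of binary strings of length `n` with Hamming
weight `r` whose longest run of ones has length at most `k` equals
`∑_{p=0}^{⌊r/(k+1)⌋} (-1)^p * C(n - p(k+1), n-r) * C(n-r+1, p)`. -/
theorem stmt17 (n r k : ℕ) (hk : 1 ≤ k) :
    ((Finset.univ.filter fun s : Fin n → Bool =>
        (List.ofFn s).count true = r ∧ ∀ x ∈ oneRuns (List.ofFn s), x ≤ k).card : ℤ)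
      = ∑ p ∈ Finset.range (r / (k + 1) + 1),
          (-1 : ℤ) ^ p * zchoose ((n : ℤ) - (p : ℤ) * ((k : ℤ) + 1)) ((n : ℤ) - (r : ℤ))
            * zchoose ((n : ℤ) - (r : ℤ) + 1) (p : ℤ) := by
  by_cases hrn : r ≤ n
  · obtain ⟨m, hm⟩ : ∃ m, n = r + m := ⟨n - r, by omega⟩
    rw [card_strings n r k m hm, count_bounded m r k]
    have hA : ∀ p : ℕ,
        ((m+1).choose p : ℤ) *
          ((-1:ℤ)^p * (if p*(k+1) ≤ r then ((r - p*(k+1) + m).choose m : ℤ) else 0))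
        = (-1 : ℤ) ^ p * zchoose ((n : ℤ) - (p : ℤ) * ((k : ℤ) + 1)) ((n : ℤ) - (r : ℤ))
            * zchoose ((n : ℤ) - (r : ℤ) + 1) (p : ℤ) := by
      intro p
      have h1 : (n : ℤ) - (r : ℤ) = (m : ℤ) := by rw [hm]; push_cast; ring
      have h2 : (m : ℤ) + 1 = ((m + 1 : ℕ) : ℤ) := by push_cast; ring
      rw [h1, h2, zchoose_coe (m+1) p]
      by_cases hp : p*(k+1) ≤ r
      · rw [if_pos hp]
        have hpk : ((p : ℤ)) * ((k:ℤ)+1) = ((p*(k+1) : ℕ) : ℤ) := by push_cast; ring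
        have h3 : (n : ℤ) - (p : ℤ) * ((k : ℤ) + 1) = ((r - p*(k+1) + m : ℕ) : ℤ) := by
          rw [hpk]; subst hm; omega
        rw [h3, zchoose_coe]
        ring
      · rw [if_neg hp]
        have hpk : ((p : ℤ)) * ((k:ℤ)+1) = ((p*(k+1) : ℕ) : ℤ) := by push_cast; ring
        have h4 : zchoose ((n : ℤ) - (p : ℤ) * ((k : ℤ) + 1)) ((m : ℤ)) = 0 := by
          unfold zchoose
          rw [if_neg]
          rintro ⟨-, hc⟩
          rw [hpk] at hc
          subst hm
          omega
        rw [h4]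
        ring
    rw [Finset.sum_congr rfl fun p _ => hA p]
    have v1 : ∀ p, m + 2 ≤ p →
        (-1 : ℤ) ^ p * zchoose ((n : ℤ) - (p : ℤ) * ((k : ℤ) + 1)) ((n : ℤ) - (r : ℤ))
            * zchoose ((n : ℤ) - (r : ℤ) + 1) (p : ℤ) = 0 := by
      intro p hp
      rw [← hA p, Nat.choose_eq_zero_of_lt (by omega)]
      simp
    have v2 : ∀ p, r / (k+1) + 1 ≤ p →
        (-1 : ℤ) ^ p * zchoose ((n : ℤ) - (p : ℤ) * ((k : ℤ) + 1)) ((n : ℤ) - (r : ℤ))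
            * zchoose ((n : ℤ) - (r : ℤ) + 1) (p : ℤ) = 0 := by
      intro p hp
      have hnle : ¬ p * (k+1) ≤ r := by
        intro hc
        have : p ≤ r / (k+1) := Nat.le_div_iff_mul_le (by omega) |>.mpr hc
        omega
      rw [← hA p, if_neg hnle]
      simp
    have e1 : ∑ p ∈ Finset.range (m+2),
        ((-1 : ℤ) ^ p * zchoose ((n : ℤ) - (p : ℤ) * ((k : ℤ) + 1)) ((n : ℤ) - (r : ℤ))
            * zchoose ((n : ℤ) - (r : ℤ) + 1) (p : ℤ))
        = ∑ p ∈ Finset.range (max (m+2) (r/(k+1)+1)),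
        ((-1 : ℤ) ^ p * zchoose ((n : ℤ) - (p : ℤ) * ((k : ℤ) + 1)) ((n : ℤ) - (r : ℤ))
            * zchoose ((n : ℤ) - (r : ℤ) + 1) (p : ℤ)) := by
      apply Finset.sum_subset
      · apply Finset.range_subset_range.mpr; omega
      · intro p hp hnp
        simp only [Finset.mem_range] at hp hnp
        exact v1 p (by omega)
    have e2 : ∑ p ∈ Finset.range (r/(k+1)+1),
        ((-1 : ℤ) ^ p * zchoose ((n : ℤ) - (p : ℤ) * ((k : ℤ) + 1)) ((n : ℤ) - (r : ℤ))
            * zchoose ((n : ℤ) - (r : ℤ) + 1) (p : ℤ))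
        = ∑ p ∈ Finset.range (max (m+2) (r/(k+1)+1)),
        ((-1 : ℤ) ^ p * zchoose ((n : ℤ) - (p : ℤ) * ((k : ℤ) + 1)) ((n : ℤ) - (r : ℤ))
            * zchoose ((n : ℤ) - (r : ℤ) + 1) (p : ℤ)) := by
      apply Finset.sum_subset
      · apply Finset.range_subset_range.mpr; omega
      · intro p hp hnp
        simp only [Finset.mem_range] at hp hnp
        exact v2 p (by omega)
    rw [e1, ← e2]
  · have hempty : (Finset.univ.filter fun s : Fin n → Bool =>
        (List.ofFn s).count true = r ∧ ∀ x ∈ oneRuns (List.ofFn s), x ≤ k) = ∅ := by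
      rw [Finset.filter_eq_empty_iff]
      intro s _
      rintro ⟨hc, -⟩
      have : (List.ofFn s).count true ≤ (List.ofFn s).length := List.count_le_length
      rw [hc, List.length_ofFn] at this
      omega
    rw [hempty]
    simp only [Finset.card_empty, Nat.cast_zero]
    symm
    apply Finset.sum_eq_zero
    intro p _
    have : zchoose ((n : ℤ) - (p : ℤ) * ((k : ℤ) + 1)) ((n : ℤ) - (r : ℤ)) = 0 := by
      unfold zchoose
      rw [if_neg]
      rintro ⟨hc, -⟩
      omega
    rw [this]
    ring
end
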